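/- Let p < 0 and let 0 ≤ x₁ < x₂ < … < x_{2N} ≤ 1 be distinct points. Then for every perfect matching μ of {1,…,2N} (a partition into N unordered pairs), Σ_{i=1}^{N} (x_{i+N} − x_i)^p ≤ Σ_{(i,j)∈μ} (x_j − x_i)^p (sums over pairs written with j > i); that is, the maximally crossing matching pairing xᵢ with x_{i+N} for i = 1,…,N is optimal for the matching problem on the interval with cost z^p, p < 0. -/

import Mathlib

/-!
Exchanging two pairs of a matching that are nested, `a < b < c < d` matched as `{a, d}, {b, c}`,
or disjoint, matched as `{a, b}, {c, d}`, for the crossing pairs `{a, c}, {b, d}` strictly lowers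
the cost: in the nested case by strict convexity of `z ↦ z ^ p` (the two new lengths have the same
sum as the old ones but lie strictly between them), in the disjoint case because both lengths grow
and `z ↦ z ^ p` is strictly decreasing. Hence a matching of minimal cost, which exists since there
are finitely many, has any two of its pairs crossing. For such a matching and a pair `{a, b}` with
`a < b`, the points strictly between `a` and `b` are matched exactly with the points outside
`[a, b]`, so `b - a - 1 = 2N - (b - a + 1)`, i.e. `b = a + N`.
-/

open Equiv Finset Function

theorem StrictConvexOn.map_add_map_lt_of_add_eq {f : ℝ → ℝ} {s : Set ℝ}
    (hf : StrictConvexOn ℝ s f) {a b c d : ℝ} (ha : a ∈ s) (hd : d ∈ s)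
    (hab : a < b) (hbd : b < d) (h : b + c = a + d) : f b + f c < f a + f d := by
  have hda : 0 < d - a := by linarith
  set θ := (d - b) / (d - a)
  have hθ : 0 < θ := div_pos (by linarith) hda
  have hθ' : 0 < 1 - θ := by rw [sub_pos, div_lt_one hda]; linarith
  have hb : θ • a + (1 - θ) • d = b := by simp only [θ, smul_eq_mul]; field_simp; ring
  have hc : (1 - θ) • a + θ • d = c := by
    rw [show c = a + d - b by linarith]; simp only [θ, smul_eq_mul]; field_simp; ring
  have h₁ := hf.2 ha hd (by linarith) hθ hθ' (by ring)
  have h₂ := hf.2 ha hd (by linarith) hθ' hθ (by ring)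
  rw [hb] at h₁
  rw [hc] at h₂
  simp only [smul_eq_mul] at h₁ h₂
  linarith

lemma strictConvexOn_rpow_of_neg {p : ℝ} (hp : p < 0) :
    StrictConvexOn ℝ (Set.Ioi 0) fun x : ℝ ↦ x ^ p := by
  refine StrictMonoOn.strictConvexOn_of_deriv (convex_Ioi 0)
    (fun x hx ↦ (Real.continuousAt_rpow_const x p (Or.inl hx.ne')).continuousWithinAt) ?_
  rw [interior_Ioi]
  intro x hx y _ hxy
  simp only [Real.deriv_rpow_const]
  exact mul_lt_mul_of_neg_left (Real.rpow_lt_rpow_of_neg hx hxy (by linarith)) hp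

section Exchange
variable {f : ℝ → ℝ} {a b c d : ℝ}

lemma exchange_nested_lt (hf : StrictConvexOn ℝ (Set.Ioi 0) f)
    (hab : a < b) (hbc : b < c) (hcd : c < d) :
    f (c - a) + f (d - b) < f (c - b) + f (d - a) :=
  hf.map_add_map_lt_of_add_eq (sub_pos.2 hbc) (show 0 < d - a by linarith)
    (by linarith) (by linarith) (by ring)

lemma exchange_disjoint_lt (hf : StrictAntiOn f (Set.Ioi 0))
    (hab : a < b) (hbc : b < c) (hcd : c < d) :
    f (c - a) + f (d - b) < f (b - a) + f (d - c) :=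
  add_lt_add (hf (sub_pos.2 hab) (show 0 < c - a by linarith) (by linarith))
    (hf (sub_pos.2 hcd) (show 0 < d - b by linarith) (by linarith))

end Exchange

def matchingCost {ι : Type*} [Fintype ι] (f : ℝ → ℝ) (x : ι → ℝ) (σ : Perm ι) : ℝ :=
  ∑ i, f |x i - x (σ i)|

section ConjSwap
variable {ι : Type*} {σ : Perm ι}

lemma involutive_conj_swap [DecidableEq ι] (hσ : Involutive σ) (u v : ι) :
    Involutive (swap u v * σ * swap u v) := fun i ↦ by
  simp [Perm.mul_apply, hσ _]

lemma conj_swap_apply_ne_self [DecidableEq ι] (hfree : ∀ i, σ i ≠ i) (u v i : ι) :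
    (swap u v * σ * swap u v) i ≠ i := by
  simpa [Perm.mul_apply, swap_apply_eq_iff] using hfree (swap u v i)

/-- Conjugating the matching `σ` by `swap u v` replaces its pairs `{u, σ u}, {v, σ v}` by
`{u, σ v}, {v, σ u}`. -/
lemma sum_conj_swap [DecidableEq ι] [Fintype ι] {M : Type*} [AddCommGroup M] (hσ : Involutive σ)
    {u v : ι} (huv : u ≠ v) (hu : σ u ≠ u) (hv : σ v ≠ v) (hσuv : σ u ≠ v)
    (G : ι → ι → M) (hG : ∀ i j, G i j = G j i) :
    ∑ i, G i ((swap u v * σ * swap u v) i) =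
      ∑ i, G i (σ i) + 2 • (G u (σ v) + G v (σ u) - G u (σ u) - G v (σ v)) := by
  have hσvu : σ v ≠ u := fun h ↦ hσuv (by rw [← h, hσ])
  have hσσ : σ u ≠ σ v := σ.injective.ne huv
  rw [← Equiv.sum_comp (swap u v), ← sub_eq_iff_eq_add', ← sum_sub_distrib,
    ← sum_subset (subset_univ {u, v, σ u, σ v})]
  · rw [sum_insert (by simp [huv, hu.symm, hσvu.symm]), sum_insert (by simp [hσuv.symm, hv.symm]),
      sum_pair hσσ]
    simp only [Perm.mul_apply, swap_apply_left, swap_apply_right, ne_eq, not_false_eq_true,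
      swap_apply_of_ne_of_ne, hu, hv, hσuv, hσvu, hσ _]
    rw [hG (σ u) v, hG (σ u) u, hG (σ v) u, hG (σ v) v]
    abel
  · intro i _ hi
    simp only [mem_insert, mem_singleton, not_or] at hi
    obtain ⟨hiu, hiv, hiσu, hiσv⟩ := hi
    have h₁ : σ i ≠ u := fun h ↦ hiσu (by rw [← h, hσ])
    have h₂ : σ i ≠ v := fun h ↦ hiσv (by rw [← h, hσ])
    simp [Perm.mul_apply, swap_apply_of_ne_of_ne, hiu, hiv, h₁, h₂]

lemma matchingCost_conj_swap [DecidableEq ι] [Fintype ι] (f : ℝ → ℝ) (x : ι → ℝ)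
    (hσ : Involutive σ) {u v : ι} (huv : u ≠ v) (hu : σ u ≠ u) (hv : σ v ≠ v) (hσuv : σ u ≠ v) :
    matchingCost f x (swap u v * σ * swap u v) = matchingCost f x σ +
      2 * (f |x u - x (σ v)| + f |x v - x (σ u)| - f |x u - x (σ u)| - f |x v - x (σ v)|) := by
  rw [matchingCost, matchingCost, sum_conj_swap hσ huv hu hv hσuv (fun i j ↦ f |x i - x j|)
    fun i j ↦ by rw [abs_sub_comm], nsmul_eq_mul, Nat.cast_ofNat]

end ConjSwap

def AllPairsCross {ι : Type*} [LinearOrder ι] (σ : Perm ι) : Prop :=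
  ∀ i j, i < σ i → j < σ j → i < j → j < σ i ∧ σ i < σ j

section Order
variable {ι : Type*} [LinearOrder ι] {σ : Perm ι}

lemma exists_matchingCost_lt_of_not_allPairsCross [Fintype ι] {f : ℝ → ℝ}
    (hconv : StrictConvexOn ℝ (Set.Ioi 0) f) (hanti : StrictAntiOn f (Set.Ioi 0))
    {x : ι → ℝ} (hx : StrictMono x) (hσ : Involutive σ) (hfree : ∀ i, σ i ≠ i)
    (hcross : ¬ AllPairsCross σ) :
    ∃ τ : Perm ι, (Involutive τ ∧ ∀ i, τ i ≠ i) ∧ matchingCost f x τ < matchingCost f x σ := by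
  have hdist : ∀ {i j}, i < j → |x i - x j| = x j - x i := fun h ↦ by
    rw [abs_sub_comm, abs_of_pos (sub_pos.2 (hx h))]
  have hdist' : ∀ {i j}, i < j → |x j - x i| = x j - x i := fun h ↦ abs_of_pos (sub_pos.2 (hx h))
  have exchange : ∀ u v, u ≠ v → σ u ≠ v →
      f |x u - x (σ v)| + f |x v - x (σ u)| < f |x u - x (σ u)| + f |x v - x (σ v)| →
      ∃ τ : Perm ι, (Involutive τ ∧ ∀ i, τ i ≠ i) ∧ matchingCost f x τ < matchingCost f x σ :=
    fun u v huv hσuv hlt ↦ ⟨_, ⟨involutive_conj_swap hσ u v, conj_swap_apply_ne_self hfree u v⟩,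
      by rw [matchingCost_conj_swap f x hσ huv (hfree u) (hfree v) hσuv]; linarith⟩
  simp only [AllPairsCross, not_forall] at hcross
  obtain ⟨a, b, ha, hb, hab, hnot⟩ := hcross
  have hσab : σ a ≠ b := fun h ↦ (hab.trans hb).ne' (by rw [← h, hσ])
  rcases hσab.lt_or_gt with hσab | hbσa
  · refine exchange (σ a) b hσab.ne (by rw [hσ]; exact hab.ne) ?_
    rw [hσ, hdist (hσab.trans hb), hdist' hab, hdist' ha, hdist hb]
    linarith [exchange_disjoint_lt hanti (hx ha) (hx hσab) (hx hb)]
  · have hσbσa : σ b < σ a :=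
      (not_lt.1 fun h ↦ hnot ⟨hbσa, h⟩).lt_of_ne (σ.injective.ne hab.ne')
    refine exchange (σ b) (σ a) hσbσa.ne (by rw [hσ]; exact hbσa.ne) ?_
    rw [hσ, hσ, hdist' (hab.trans hb), hdist' hbσa, hdist' hb, hdist' ha]
    linarith [exchange_nested_lt hconv (hx hab) (hx hb) (hx hσbσa)]

lemma AllPairsCross.apply_notMem_Icc (hcross : AllPairsCross σ) (hσ : Involutive σ)
    (hfree : ∀ i, σ i ≠ i) {a i : ι} (ha : a < σ a) (hi : i ∈ Set.Ioo a (σ a)) :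
    σ i ∉ Set.Icc a (σ a) := by
  obtain ⟨hai, hia⟩ := hi
  rw [Set.mem_Icc, not_and_or, not_le, not_le]
  rcases (hfree i).lt_or_gt with h | h
  · refine Or.inl (lt_of_not_ge fun hle ↦ ?_)
    have hne : a ≠ σ i := fun he ↦ hia.ne (by rw [he, hσ])
    have := (hcross a (σ i) ha (by rwa [hσ]) (hle.lt_of_ne hne)).2
    rw [hσ] at this
    exact hia.not_gt this
  · exact Or.inr (hcross a i ha h hai).2

lemma AllPairsCross.apply_mem_Ioo (hcross : AllPairsCross σ) (hσ : Involutive σ)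
    (hfree : ∀ i, σ i ≠ i) {a i : ι} (ha : a < σ a) (hi : i ∉ Set.Icc a (σ a)) :
    σ i ∈ Set.Ioo a (σ a) := by
  rw [Set.mem_Icc, not_and_or, not_le, not_le] at hi
  rcases (hfree i).lt_or_gt with h | h
  · rcases lt_trichotomy (σ i) a with hj | rfl | hj
    · have := hcross (σ i) a (by rwa [hσ]) ha hj
      rw [hσ] at this
      rcases hi with hi | hi
      exacts [absurd this.1 hi.not_gt, absurd this.2 hi.not_gt]
    · rw [hσ] at hi
      exact absurd hi (by simp [h.le])
    · have := hcross a (σ i) ha (by rwa [hσ]) hj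
      rw [hσ] at this
      exact ⟨hj, this.1⟩
  · rcases hi with hi | hi
    · exact hcross i a h ha hi
    · exact absurd (hcross a i ha h (ha.trans hi)).1 hi.not_gt

end Order

section Halves
variable {N : ℕ} {σ : Perm (Fin (2 * N))}

lemma Fin.val_lt_two_mul (i : Fin N) : (i : ℕ) < 2 * N := by omega

lemma Fin.val_add_lt_two_mul (i : Fin N) : (i : ℕ) + N < 2 * N := by omega

lemma AllPairsCross.val_apply_eq_add (hcross : AllPairsCross σ) (hσ : Involutive σ)
    (hfree : ∀ i, σ i ≠ i) {a : Fin (2 * N)} (ha : a < σ a) : (σ a : ℕ) = a + N := by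
  have hcard : #(Ioo a (σ a)) = #(Icc a (σ a))ᶜ := by
    refine card_nbij' σ σ (fun i hi ↦ ?_) (fun i hi ↦ ?_) (fun i _ ↦ hσ i) (fun i _ ↦ hσ i)
    · rw [coe_Ioo] at hi
      rw [coe_compl, coe_Icc]
      exact hcross.apply_notMem_Icc hσ hfree ha hi
    · rw [coe_compl, coe_Icc] at hi
      rw [coe_Ioo]
      exact hcross.apply_mem_Ioo hσ hfree ha hi
  rw [Fin.card_Ioo, card_compl, Fintype.card_fin, Fin.card_Icc] at hcard
  have := (σ a).isLt
  rw [Fin.lt_def] at ha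
  omega

lemma AllPairsCross.val_apply_eq_add_of_lt (hcross : AllPairsCross σ) (hσ : Involutive σ)
    (hfree : ∀ i, σ i ≠ i) {a : Fin (2 * N)} (ha : (a : ℕ) < N) : (σ a : ℕ) = a + N := by
  rcases (hfree a).lt_or_gt with h | h
  · have := hcross.val_apply_eq_add hσ hfree (a := σ a) (by rwa [hσ])
    rw [hσ] at this
    omega
  · exact hcross.val_apply_eq_add hσ hfree h

lemma sum_fin_two_mul {M : Type*} [AddCommMonoid M] (g : Fin (2 * N) → M) :
    ∑ i, g i = ∑ i : Fin N, (g ⟨i, i.val_lt_two_mul⟩ + g ⟨i + N, i.val_add_lt_two_mul⟩) := by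
  rw [← (finCongr (two_mul N)).symm.sum_comp, Fin.sum_univ_add, ← sum_add_distrib]
  refine sum_congr rfl fun i _ ↦ ?_
  congr 2
  ext
  simp [add_comm]

lemma matchingCost_eq_of_apply_eq_add (f : ℝ → ℝ) {x : Fin (2 * N) → ℝ} (hx : StrictMono x)
    (hσ : Involutive σ) (h : ∀ a : Fin (2 * N), (a : ℕ) < N → (σ a : ℕ) = a + N) :
    matchingCost f x σ =
      2 * ∑ i : Fin N, f (x ⟨i + N, i.val_add_lt_two_mul⟩ - x ⟨i, i.val_lt_two_mul⟩) := by
  rw [matchingCost, sum_fin_two_mul, mul_sum]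
  refine sum_congr rfl fun i _ ↦ ?_
  have hi : σ ⟨i, i.val_lt_two_mul⟩ = ⟨i + N, i.val_add_lt_two_mul⟩ := Fin.ext (h _ i.isLt)
  have hlt : x ⟨i, i.val_lt_two_mul⟩ < x ⟨i + N, i.val_add_lt_two_mul⟩ :=
    hx (Fin.mk_lt_mk.2 (by omega))
  rw [← hi, hσ, hi, abs_sub_comm, abs_of_pos (sub_pos.2 hlt)]
  ring

end Halves

theorem two_mul_sum_le_matchingCost {N : ℕ} {f : ℝ → ℝ}
    (hconv : StrictConvexOn ℝ (Set.Ioi 0) f) (hanti : StrictAntiOn f (Set.Ioi 0))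
    {x : Fin (2 * N) → ℝ} (hx : StrictMono x) {π : Perm (Fin (2 * N))} (hπ : Involutive π)
    (hfree : ∀ i, π i ≠ i) :
    2 * ∑ i : Fin N, f (x ⟨i + N, i.val_add_lt_two_mul⟩ - x ⟨i, i.val_lt_two_mul⟩) ≤
      matchingCost f x π := by
  obtain ⟨σ, ⟨hσ, hσfree⟩, hmin⟩ :=
    Set.exists_min_image {σ : Perm (Fin (2 * N)) | Involutive σ ∧ ∀ i, σ i ≠ i} (matchingCost f x)
      (Set.toFinite _) ⟨π, hπ, hfree⟩
  have hcross : AllPairsCross σ := by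
    by_contra hcross
    obtain ⟨τ, hτ, hlt⟩ :=
      exists_matchingCost_lt_of_not_allPairsCross hconv hanti hx hσ hσfree hcross
    exact (hmin τ hτ).not_gt hlt
  rw [← matchingCost_eq_of_apply_eq_add f hx hσ fun _ ↦ hcross.val_apply_eq_add_of_lt hσ hσfree]
  exact hmin π ⟨hπ, hfree⟩

/-- For `p < 0` and `2N` increasingly ordered distinct points on `[0,1]`, the
maximally crossing matching pairing `xᵢ` with `x_{i+N}` is optimal: a perfect
matching is encoded as a fixed-point-free involution `π`, each pair being
counted twice in the sum. -/
theorem matching_crossing_pairs_optimal {N : ℕ} (p : ℝ) (hp : p < 0)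
    (x : Fin (2 * N) → ℝ) (hx : StrictMono x)
    (π : Equiv.Perm (Fin (2 * N)))
    (hinv : ∀ i, π (π i) = i) (hfree : ∀ i, π i ≠ i) :
    ∑ i : Fin N, (x ⟨i.1 + N, by omega⟩ - x ⟨i.1, by omega⟩) ^ p ≤
      (1 / 2) * ∑ i, |x i - x (π i)| ^ p := by
  have := two_mul_sum_le_matchingCost (strictConvexOn_rpow_of_neg hp)
    (Real.strictAntiOn_rpow_Ioi_of_exponent_neg hp) hx hinv hfree
  rw [matchingCost] at this
  linarith
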